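/- Induction (truth) lemma for the canonical game G(X₀): for any play (α,δ,ω)∈P and any formula φ of Φ, (α,δ,ω)⊩φ if and only if φ∈hd(ω). -/

import Mathlib

namespace DutyToWarn

/-- The language Φ: propositional variables, negation, implication,
distributed knowledge `K_C φ`, and second-order blameworthiness `B_C^D φ`. -/
inductive Formula (Agent V : Type) : Type
  | var : V → Formula Agent V
  | neg : Formula Agent V → Formula Agent V
  | imp : Formula Agent V → Formula Agent V → Formula Agent V
  | know : Set Agent → Formula Agent V → Formula Agent V
  | blame : Set Agent → Set Agent → Formula Agent V → Formula Agent V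

variable {Agent V B : Type}

namespace Formula

/-- φ ∨ ψ is defined through ¬ and → in the usual way: ¬φ → ψ. -/
def disj (φ ψ : Formula Agent V) : Formula Agent V := imp (neg φ) ψ

/-- φ ∧ ψ is defined through ¬ and → in the usual way: ¬(φ → ¬ψ). -/
def conj (φ ψ : Formula Agent V) : Formula Agent V := neg (imp φ (neg ψ))

/-- φ ↔ ψ is defined as (φ → ψ) ∧ (ψ → φ). -/
def biimp (φ ψ : Formula Agent V) : Formula Agent V := conj (imp φ ψ) (imp ψ φ)

/-- K̄_C φ abbreviates ¬ K_C ¬ φ. -/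
def dknow (C : Set Agent) (φ : Formula Agent V) : Formula Agent V := neg (know C (neg φ))

end Formula

/-- The Boolean constant ⊥, defined through ¬ and →. -/
def falsum [Inhabited V] : Formula Agent V :=
  Formula.neg (Formula.imp (Formula.var default) (Formula.var default))

/-- The disjunction χ₁ ∨ … ∨ χₙ of a list of formulas; for n = 0 it is ⊥. -/
def bigOr [Inhabited V] : List (Formula Agent V) → Formula Agent V
  | [] => falsum
  | [φ] => φ
  | φ :: ψ :: l => φ.disj (bigOr (ψ :: l))

/-- A propositional valuation: any assignment of truth values to formulas
that respects negation and implication (treating K- and B-formulas as atoms). -/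
def IsPropValuation (v : Formula Agent V → Prop) : Prop :=
  (∀ φ : Formula Agent V, v φ.neg ↔ ¬ v φ) ∧
    ∀ φ ψ : Formula Agent V, v (φ.imp ψ) ↔ (v φ → v ψ)

/-- A propositional tautology in the language Φ. -/
def Tautology (φ : Formula Agent V) : Prop :=
  ∀ v : Formula Agent V → Prop, IsPropValuation v → v φ

/-- ⊢ φ : provability from the axioms using Modus Ponens and Necessitation. -/
inductive Provable : Formula Agent V → Prop
  | taut {φ : Formula Agent V} : Tautology φ → Provable φ
  | truthK {C : Set Agent} {φ : Formula Agent V} :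
      Provable ((Formula.know C φ).imp φ)
  | truthB {C D : Set Agent} {φ : Formula Agent V} :
      Provable ((Formula.blame C D φ).imp φ)
  | distr {C : Set Agent} {φ ψ : Formula Agent V} :
      Provable ((Formula.know C (φ.imp ψ)).imp ((Formula.know C φ).imp (Formula.know C ψ)))
  | negIntro {C : Set Agent} {φ : Formula Agent V} :
      Provable ((Formula.know C φ).neg.imp (Formula.know C (Formula.know C φ).neg))
  | monoK {C E : Set Agent} {φ : Formula Agent V} (h : C ⊆ E) :
      Provable ((Formula.know C φ).imp (Formula.know E φ))
  | monoB {C D E F : Set Agent} {φ : Formula Agent V} (h1 : C ⊆ E) (h2 : D ⊆ F) :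
      Provable ((Formula.blame C D φ).imp (Formula.blame E F φ))
  | noneToAct {C : Set Agent} {φ : Formula Agent V} :
      Provable (Formula.neg (Formula.blame C ∅ φ))
  | jointResp {C D E F : Set Agent} {φ ψ : Formula Agent V} (h : D ∩ F = ∅) :
      Provable (((Formula.dknow C (Formula.blame C D φ)).conj
        (Formula.dknow E (Formula.blame E F ψ))).imp
        ((φ.disj ψ).imp (Formula.blame (C ∪ E) (D ∪ F) (φ.disj ψ))))
  | strictCond {C D : Set Agent} {φ ψ : Formula Agent V} :
      Provable ((Formula.know C (φ.imp ψ)).imp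
        ((Formula.blame C D ψ).imp (φ.imp (Formula.blame C D φ))))
  | introB {C D : Set Agent} {φ : Formula Agent V} :
      Provable ((Formula.blame C D φ).imp (Formula.know C (φ.imp (Formula.blame C D φ))))
  | mp {φ ψ : Formula Agent V} : Provable (φ.imp ψ) → Provable φ → Provable ψ
  | nec {C : Set Agent} {φ : Formula Agent V} : Provable φ → Provable (Formula.know C φ)

/-- X ⊢ φ : provability from the theorems of the system together with the
additional hypotheses X, using only Modus Ponens. -/
inductive ProvableFrom (X : Set (Formula Agent V)) : Formula Agent V → Prop
  | hyp {φ : Formula Agent V} (h : φ ∈ X) : ProvableFrom X φ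
  | thm {φ : Formula Agent V} (h : Provable φ) : ProvableFrom X φ
  | mp {φ ψ : Formula Agent V} (h1 : ProvableFrom X (φ.imp ψ)) (h2 : ProvableFrom X φ) :
      ProvableFrom X ψ

/-- A game (Definition 1). -/
structure Game (Agent V : Type) where
  I : Type
  Δ : Type
  Ω : Type
  sim : Agent → I → I → Prop
  sim_equiv : ∀ a : Agent, Equivalence (sim a)
  P : Set (I × (Agent → Δ) × Ω)
  play_exists : ∀ (α : I) (δ : Agent → Δ), ∃ ω : Ω, (α, δ, ω) ∈ P
  π : V → Set (I × (Agent → Δ) × Ω)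
  π_sub : ∀ p : V, π p ⊆ P

/-- α ∼_C α' : indistinguishability by a coalition. -/
def Game.simC (G : Game Agent V) (C : Set Agent) (α α' : G.I) : Prop :=
  ∀ a ∈ C, G.sim a α α'

/-- Satisfiability (α,δ,ω) ⊩ φ (Definition 2). -/
def Game.Sat (G : Game Agent V) :
    Formula Agent V → (G.I × (Agent → G.Δ) × G.Ω) → Prop
  | Formula.var p, x => x ∈ G.π p
  | Formula.neg φ, x => ¬ G.Sat φ x
  | Formula.imp φ ψ, x => G.Sat φ x → G.Sat ψ x
  | Formula.know C φ, x => ∀ x' ∈ G.P, G.simC C x.1 x'.1 → G.Sat φ x'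
  | Formula.blame C D φ, x => G.Sat φ x ∧
      ∃ s : Agent → G.Δ, ∀ x' ∈ G.P, G.simC C x.1 x'.1 →
        (∀ a ∈ D, s a = x'.2.1 a) → ¬ G.Sat φ x'

/-- A set of formulas is consistent if no contradiction is derivable from it. -/
def Consistent (X : Set (Formula Agent V)) : Prop :=
  ¬ ∃ φ : Formula Agent V, ProvableFrom X φ ∧ ProvableFrom X φ.neg

/-- A maximal consistent set: consistent with no proper consistent extension. -/
def MaxConsistent (X : Set (Formula Agent V)) : Prop :=
  Consistent X ∧ ∀ Y : Set (Formula Agent V), X ⊆ Y → Consistent Y → Y = X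

/-- One step (Cᵢ,bᵢ),Xᵢ of a sequence in the set of outcomes of the canonical game. -/
abbrev Step (Agent V B : Type) : Type := Set Agent × B × Set (Formula Agent V)

/-- Validity of a sequence X₀,(C₁,b₁),X₁,…,(Cₙ,bₙ),Xₙ : each Xᵢ is maximal
consistent and {φ | K_{Cᵢ} φ ∈ X_{i-1}} ⊆ Xᵢ. -/
def ValidSeq (X₀ : Set (Formula Agent V)) : List (Step Agent V B) → Prop
  | [] => True
  | (C, _, X) :: l =>
      MaxConsistent X ∧ (∀ φ : Formula Agent V, Formula.know C φ ∈ X₀ → φ ∈ X) ∧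
        ValidSeq X l

/-- The set Ω of outcomes of the canonical game G(X₀): valid sequences starting at X₀
(the sequence of steps after X₀ is recorded). -/
def COutcome (X₀ : Set (Formula Agent V)) (B : Type) : Type :=
  {l : List (Step Agent V B) // ValidSeq X₀ l}

/-- The last maximal consistent set of a sequence. -/
def hdSeq (X₀ : Set (Formula Agent V)) : List (Step Agent V B) → Set (Formula Agent V)
  | [] => X₀
  | (_, _, X) :: l => hdSeq X l

/-- hd(ω) : the last maximal consistent set of the outcome ω. -/
def chd {X₀ : Set (Formula Agent V)} (ω : COutcome X₀ B) : Set (Formula Agent V) :=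
  hdSeq X₀ ω.1

/-- ω ∼_a ω' in the Tree of Knowledge: all edges along the unique path between
ω and ω' are labeled with agent a, i.e. there is a common ancestor w such that
every edge from w down to ω and from w down to ω' is labeled with a. -/
def csimA {X₀ : Set (Formula Agent V)} (a : Agent) (u v : COutcome X₀ B) : Prop :=
  ∃ w t t' : List (Step Agent V B),
    u.1 = w ++ t ∧ v.1 = w ++ t' ∧ (∀ s ∈ t, a ∈ s.1) ∧ (∀ s ∈ t', a ∈ s.1)

/-- ω ∼_C ω' iff ω ∼_a ω' for each a ∈ C. -/
def csimC {X₀ : Set (Formula Agent V)} (C : Set Agent) (u v : COutcome X₀ B) : Prop :=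
  ∀ a ∈ C, csimA a u v

/-- The relation ∼_𝒜 on outcomes. -/
def crel (X₀ : Set (Formula Agent V)) (B : Type) : COutcome X₀ B → COutcome X₀ B → Prop :=
  csimC (Set.univ : Set Agent)

/-- The set I of initial states of the canonical game: I = Ω/∼_𝒜. -/
def CI (X₀ : Set (Formula Agent V)) (B : Type) : Type :=
  Quot (crel X₀ B)

/-- The equivalence class of an outcome. -/
def ctoI {X₀ : Set (Formula Agent V)} (u : COutcome X₀ B) : CI X₀ B :=
  Quot.mk (crel X₀ B) u

/-- The relation α ∼_C α' on I, induced on representatives. -/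
def IsimC {X₀ : Set (Formula Agent V)} (C : Set Agent) (α α' : CI X₀ B) : Prop :=
  ∃ u v : COutcome X₀ B, ctoI u = α ∧ ctoI v = α' ∧ csimC C u v

/-- The domain of actions of the canonical game: Δ = {(φ,C,ω)}. -/
abbrev CAct (X₀ : Set (Formula Agent V)) (B : Type) : Type :=
  Formula Agent V × Set Agent × COutcome X₀ B

/-- Triples (α, δ, ω) over the canonical game. -/
abbrev CPlay (X₀ : Set (Formula Agent V)) (B : Type) : Type :=
  CI X₀ B × (Agent → CAct X₀ B) × COutcome X₀ B

/-- The set P of plays of the canonical game (Definition 13). -/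
def CP (X₀ : Set (Formula Agent V)) (B : Type) : Set (CPlay X₀ B) :=
  {x | ctoI x.2.2 = x.1 ∧
    ∀ (v : COutcome X₀ B) (C D : Set Agent) (ψ : Formula Agent V),
      Formula.dknow C (Formula.blame C D ψ) ∈ chd v →
      (∀ a ∈ D, x.2.1 a = (ψ, C, v)) →
      csimC C x.2.2 v →
      Formula.neg ψ ∈ chd x.2.2}

/-- π(p) in the canonical game. -/
def Cπ (X₀ : Set (Formula Agent V)) (B : Type) (p : V) : Set (CPlay X₀ B) :=
  {x | x ∈ CP X₀ B ∧ Formula.var p ∈ chd x.2.2}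

/-- Satisfiability in the canonical game G(X₀) (Definition 2 instantiated). -/
def CSat (X₀ : Set (Formula Agent V)) (B : Type) :
    Formula Agent V → CPlay X₀ B → Prop
  | Formula.var p, x => x ∈ Cπ X₀ B p
  | Formula.neg φ, x => ¬ CSat X₀ B φ x
  | Formula.imp φ ψ, x => CSat X₀ B φ x → CSat X₀ B ψ x
  | Formula.know C φ, x => ∀ x' ∈ CP X₀ B, IsimC C x.1 x'.1 → CSat X₀ B φ x'
  | Formula.blame C D φ, x => CSat X₀ B φ x ∧
      ∃ s : Agent → CAct X₀ B, ∀ x' ∈ CP X₀ B, IsimC C x.1 x'.1 →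
        (∀ a ∈ D, s a = x'.2.1 a) → ¬ CSat X₀ B φ x'

/-!
The proof is by induction on `φ`; the Boolean cases are maximal consistency. Knowledge of a
coalition is preserved along edges whose label contains it (Truth, Negative Introspection and
the derived Positive Introspection), hence between `C`-indistinguishable outcomes; conversely,
if `K_C φ ∉ hd(ω)`, a new child of `ω` along an edge labelled `C` with head extending
`{¬φ} ∪ {χ | K_C χ ∈ hd(ω)}` refutes `K_C φ`.

For `B_C^D φ ∉ hd(ω)` with `φ ∈ hd(ω)` and an action profile `s` of `D`, the child is built so
that its head contains `φ`, everything `C` knows at `ω`, and `¬ψ` for every action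
`(ψ, C', v)` of `s` with `C' ⊆ C` such that `K̄_{C'} B_{C'}^{D'} ψ ∈ hd(ω)`, where `D'` is the set
of agents choosing that action. The head is consistent: otherwise
finitely many such threats, with pairwise disjoint coalitions of agents making them, already
entail `φ → ψ₁ ∨ … ∨ ψₙ`, and Joint Responsibility followed by Strict Conditional would give
`B_C^D φ ∈ hd(ω)`. The edge gets a label `b ∈ ℬ` used by no action of `s` (possible because
`|ℬ| > |𝒜|`), so no action of `s` refers to an outcome below the new one.
-/

universe u

open Formula

section Logic

variable {X Y : Set (Formula Agent V)} {C D E : Set Agent} {φ ψ χ : Formula Agent V}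

def knowledge (C : Set Agent) (X : Set (Formula Agent V)) : Set (Formula Agent V) :=
  {χ | know C χ ∈ X}

theorem Provable.neg_imp_neg (h : Provable (φ.imp ψ)) : Provable (ψ.neg.imp φ.neg) :=
  (Provable.taut fun v hv => by simp only [hv.1, hv.2]; tauto :
    Provable ((φ.imp ψ).imp (ψ.neg.imp φ.neg))).mp h

theorem Provable.know_imp_know (h : Provable (φ.imp ψ)) :
    Provable ((know C φ).imp (know C ψ)) :=
  Provable.distr.mp (Provable.nec h)

theorem Provable.dknow_know_imp_know : Provable ((dknow C (know C φ)).imp (know C φ)) :=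
  (Provable.taut fun v hv => by simp only [dknow, hv.1, hv.2]; tauto :
    Provable (((know C φ).neg.imp (know C (know C φ).neg)).imp
      ((dknow C (know C φ)).imp (know C φ)))).mp Provable.negIntro

theorem ProvableFrom.mono (hXY : X ⊆ Y) (h : ProvableFrom X φ) : ProvableFrom Y φ := by
  induction h with
  | hyp h => exact .hyp (hXY h)
  | thm h => exact .thm h
  | mp _ _ ih₁ ih₂ => exact ih₁.mp ih₂

theorem ProvableFrom.deduction (h : ProvableFrom (insert φ X) ψ) :
    ProvableFrom X (φ.imp ψ) := by
  induction h with
  | @hyp χ h =>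
    rcases h with rfl | h
    · exact .thm (.taut fun v hv => by simp only [hv.2]; tauto)
    · exact (ProvableFrom.thm (.taut fun v hv => by simp only [hv.2]; tauto :
        Provable (χ.imp (φ.imp χ)))).mp (.hyp h)
  | @thm χ h =>
    exact .thm ((Provable.taut fun v hv => by simp only [hv.2]; tauto :
      Provable (χ.imp (φ.imp χ))).mp h)
  | @mp χ ρ _ _ ih₁ ih₂ =>
    exact ((ProvableFrom.thm (.taut fun v hv => by simp only [hv.2]; tauto :
      Provable ((φ.imp (χ.imp ρ)).imp ((φ.imp χ).imp (φ.imp ρ))))).mp ih₁).mp ih₂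

theorem ProvableFrom.of_not_consistent (h : ¬ Consistent X) (ψ : Formula Agent V) :
    ProvableFrom X ψ := by
  obtain ⟨χ, h₁, h₂⟩ := not_not.1 h
  exact ((ProvableFrom.thm (.taut fun v hv => by simp only [hv.1, hv.2]; tauto :
    Provable (χ.imp (χ.neg.imp ψ)))).mp h₁).mp h₂

theorem provableFrom_neg_of_not_consistent_insert (h : ¬ Consistent (insert φ X)) :
    ProvableFrom X φ.neg :=
  (ProvableFrom.thm (.taut fun v hv => by simp only [hv.1, hv.2]; tauto :
    Provable ((φ.imp φ.neg).imp φ.neg))).mp (ProvableFrom.of_not_consistent h _).deduction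

theorem provableFrom_of_not_consistent_insert_neg (h : ¬ Consistent (insert φ.neg X)) :
    ProvableFrom X φ :=
  (ProvableFrom.thm (.taut fun v hv => by simp only [hv.1, hv.2]; tauto :
    Provable ((φ.neg.imp φ).imp φ))).mp (ProvableFrom.of_not_consistent h _).deduction

theorem ProvableFrom.exists_mem_of_sUnion {c : Set (Set (Formula Agent V))}
    (hc : DirectedOn (· ⊆ ·) c) (hne : c.Nonempty) (h : ProvableFrom (⋃₀ c) φ) :
    ∃ s ∈ c, ProvableFrom s φ := by
  induction h with
  | hyp h => obtain ⟨s, hs, hφ⟩ := h; exact ⟨s, hs, .hyp hφ⟩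
  | thm h => exact ⟨hne.some, hne.some_mem, .thm h⟩
  | mp _ _ ih₁ ih₂ =>
    obtain ⟨s₁, hs₁, h₁⟩ := ih₁
    obtain ⟨s₂, hs₂, h₂⟩ := ih₂
    obtain ⟨s, hs, hs₁s, hs₂s⟩ := hc s₁ hs₁ s₂ hs₂
    exact ⟨s, hs, (h₁.mono hs₁s).mp (h₂.mono hs₂s)⟩

theorem ProvableFrom.exists_finset_of_union_image {ι : Type*} {f : ι → Formula Agent V}
    {S : Set ι} (h : ProvableFrom (X ∪ f '' S) φ) :
    ∃ T : Finset ι, ↑T ⊆ S ∧ ProvableFrom (X ∪ f '' ↑T) φ := by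
  classical
  induction h with
  | hyp h =>
    rcases h with h | ⟨i, hi, rfl⟩
    · exact ⟨∅, by simp, .hyp (.inl h)⟩
    · exact ⟨{i}, by simpa using hi, .hyp (.inr ⟨i, by simp, rfl⟩)⟩
  | thm h => exact ⟨∅, by simp, .thm h⟩
  | mp _ _ ih₁ ih₂ =>
    obtain ⟨T₁, hT₁, h₁⟩ := ih₁
    obtain ⟨T₂, hT₂, h₂⟩ := ih₂
    refine ⟨T₁ ∪ T₂, by simpa using ⟨hT₁, hT₂⟩, ?_⟩
    exact (h₁.mono (by gcongr; simp)).mp (h₂.mono (by gcongr; simp))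

theorem lindenbaum (hX : Consistent X) : ∃ Y, X ⊆ Y ∧ MaxConsistent Y := by
  obtain ⟨M, hXM, hM⟩ := zorn_subset_nonempty {Y | Consistent Y} (fun c hc hchain hne => by
    refine ⟨⋃₀ c, fun ⟨χ, h₁, h₂⟩ => ?_, fun s hs => Set.subset_sUnion_of_mem hs⟩
    obtain ⟨s₁, hs₁, h₁⟩ := h₁.exists_mem_of_sUnion hchain.directedOn hne
    obtain ⟨s₂, hs₂, h₂⟩ := h₂.exists_mem_of_sUnion hchain.directedOn hne
    obtain ⟨s, hs, hs₁s, hs₂s⟩ := hchain.directedOn s₁ hs₁ s₂ hs₂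
    exact hc hs ⟨χ, h₁.mono hs₁s, h₂.mono hs₂s⟩) X hX
  exact ⟨M, hXM, hM.prop, fun Y hMY hY => hM.eq_of_ge hY hMY⟩

namespace MaxConsistent

variable (hX : MaxConsistent X)
include hX

theorem mem_of_consistent_insert (h : Consistent (insert φ X)) : φ ∈ X :=
  hX.2 _ (Set.subset_insert φ X) h ▸ Set.mem_insert φ X

theorem mem_of_provableFrom (h : ProvableFrom X φ) : φ ∈ X :=
  hX.mem_of_consistent_insert fun hinc =>
    hX.1 ⟨φ, h, provableFrom_neg_of_not_consistent_insert (not_not.2 hinc)⟩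

theorem mem_of_provable (h : Provable φ) : φ ∈ X :=
  hX.mem_of_provableFrom (.thm h)

theorem mp_mem (himp : φ.imp ψ ∈ X) (hφ : φ ∈ X) : ψ ∈ X :=
  hX.mem_of_provableFrom ((ProvableFrom.hyp himp).mp (.hyp hφ))

theorem mem_of_provable_imp (himp : Provable (φ.imp ψ)) (hφ : φ ∈ X) : ψ ∈ X :=
  hX.mp_mem (hX.mem_of_provable himp) hφ

theorem neg_mem_iff : φ.neg ∈ X ↔ φ ∉ X :=
  ⟨fun hn h => hX.1 ⟨φ, .hyp h, .hyp hn⟩, fun h => hX.mem_of_consistent_insert fun hinc =>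
    h (hX.mem_of_provableFrom (provableFrom_of_not_consistent_insert_neg (not_not.2 hinc)))⟩

theorem imp_mem_iff : φ.imp ψ ∈ X ↔ (φ ∈ X → ψ ∈ X) := by
  refine ⟨hX.mp_mem, fun h => ?_⟩
  by_cases hφ : φ ∈ X
  · exact hX.mem_of_provable_imp (.taut fun v hv => by simp only [hv.2]; tauto) (h hφ)
  · exact hX.mem_of_provable_imp (.taut fun v hv => by simp only [hv.1, hv.2]; tauto)
      (hX.neg_mem_iff.2 hφ)

theorem disj_mem_iff : φ.disj ψ ∈ X ↔ φ ∈ X ∨ ψ ∈ X := by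
  rw [disj, hX.imp_mem_iff, hX.neg_mem_iff]
  tauto

theorem conj_mem_iff : φ.conj ψ ∈ X ↔ φ ∈ X ∧ ψ ∈ X := by
  rw [conj, hX.neg_mem_iff, hX.imp_mem_iff, hX.neg_mem_iff]
  tauto

theorem knowledge_subset : knowledge C X ⊆ X :=
  fun _ h => hX.mem_of_provable_imp .truthK h

theorem know_mem_of_provableFrom (h : ProvableFrom (knowledge C X) φ) : know C φ ∈ X := by
  induction h with
  | hyp h => exact h
  | thm h => exact hX.mem_of_provable (.nec h)
  | mp _ _ ih₁ ih₂ => exact hX.mp_mem (hX.mem_of_provable_imp .distr ih₁) ih₂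

theorem dknow_mem_of_mem (h : φ ∈ X) : dknow C φ ∈ X :=
  hX.neg_mem_iff.2 fun hK => hX.neg_mem_iff.1 (hX.mem_of_provable_imp .truthK hK) h

theorem know_know_mem (h : know C φ ∈ X) : know C (know C φ) ∈ X :=
  hX.mem_of_provable_imp (Provable.know_imp_know .dknow_know_imp_know)
    (hX.mem_of_provable_imp .negIntro (hX.dknow_mem_of_mem h))

theorem dknow_mem_of_provable_imp (himp : Provable (φ.imp ψ)) (h : dknow C φ ∈ X) :
    dknow C ψ ∈ X :=
  hX.neg_mem_iff.2 fun hK =>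
    hX.neg_mem_iff.1 h (hX.mem_of_provable_imp himp.neg_imp_neg.know_imp_know hK)

theorem dknow_blame_empty_not_mem : dknow C (blame C ∅ φ) ∉ X :=
  fun h => hX.neg_mem_iff.1 h (hX.mem_of_provable (.nec .noneToAct))

theorem blame_mem_of_dknow_blame (h : dknow C (blame C D φ) ∈ X) (hφ : φ ∈ X) :
    blame C D φ ∈ X := by
  by_contra hB
  have hK : (know C (φ.imp (blame C D φ))).neg ∈ X :=
    hX.neg_mem_iff.2 fun hK => hB (hX.mp_mem (hX.mem_of_provable_imp .truthK hK) hφ)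
  exact hX.neg_mem_iff.1 h (hX.mem_of_provable_imp Provable.introB.neg_imp_neg.know_imp_know
    (hX.mem_of_provable_imp .negIntro hK))

theorem know_mem_iff_of_knowledge_subset (hY : MaxConsistent Y) (hXY : knowledge C X ⊆ Y)
    (hEC : E ⊆ C) : know E φ ∈ Y ↔ know E φ ∈ X := by
  refine ⟨fun h => ?_, fun h => hXY (hX.mem_of_provable_imp (.monoK hEC) (hX.know_know_mem h))⟩
  by_contra hn
  have hK : know C (know E φ).neg ∈ X :=
    hX.mem_of_provable_imp (.monoK hEC) (hX.mem_of_provable_imp .negIntro (hX.neg_mem_iff.2 hn))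
  exact hY.neg_mem_iff.1 (hXY hK) h

/-- Joint Responsibility absorbs the threats of `S` one at a time into the disjunction `θ`
and the coalition `E`; Strict Conditional concludes once `S` is exhausted. -/
theorem blame_mem_of_threats {ι : Type*} {Cs Ds : ι → Set Agent} {ψ : ι → Formula Agent V}
    (hDs : Pairwise fun i j => Disjoint (Ds i) (Ds j)) (hφ : φ ∈ X) (S : Finset ι)
    (hS : ∀ i ∈ S, Cs i ⊆ C ∧ Ds i ⊆ D ∧ dknow (Cs i) (blame (Cs i) (Ds i) (ψ i)) ∈ X)
    {θ : Formula Agent V} (hθ : θ ∈ X) (hE : blame C E θ ∈ X) (hED : E ⊆ D)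
    (hES : ∀ i ∈ S, Disjoint E (Ds i))
    (hprov : ProvableFrom (knowledge C X ∪ (fun i => (ψ i).neg) '' ↑S) (φ.imp θ)) :
    blame C D φ ∈ X := by
  classical
  induction S using Finset.induction_on generalizing θ E with
  | empty =>
    have hK : know C (φ.imp θ) ∈ X := hX.know_mem_of_provableFrom (by simpa using hprov)
    exact hX.mem_of_provable_imp (.monoB subset_rfl hED)
      (hX.mp_mem (hX.mp_mem (hX.mem_of_provable_imp .strictCond hK) hE) hφ)
  | insert j S hj ih =>
    obtain ⟨hCj, hDj, hj_threat⟩ := hS j (Finset.mem_insert_self j S)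
    have hθψ : θ.disj (ψ j) ∈ X := hX.disj_mem_iff.2 (.inl hθ)
    have hjoint : blame C (E ∪ Ds j) (θ.disj (ψ j)) ∈ X := by
      have := hX.mp_mem (hX.mem_of_provable_imp
        (.jointResp (Set.disjoint_iff_inter_eq_empty.1 (hES j (Finset.mem_insert_self j S))))
        (hX.conj_mem_iff.2 ⟨hX.dknow_mem_of_mem hE, hj_threat⟩)) hθψ
      rwa [Set.union_eq_left.2 hCj] at this
    refine ih (fun i hi => hS i (Finset.mem_insert_of_mem hi)) hθψ hjoint
      (Set.union_subset hED hDj) (fun i hi => ?_) ?_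
    · exact (hES i (Finset.mem_insert_of_mem hi)).union_left
        (hDs (ne_of_mem_of_not_mem hi hj).symm)
    · rw [Finset.coe_insert, Set.image_insert_eq, Set.union_insert] at hprov
      exact (ProvableFrom.thm (.taut fun v hv => by simp only [disj, hv.1, hv.2]; tauto :
        Provable (((ψ j).neg.imp (φ.imp θ)).imp (φ.imp (θ.disj (ψ j)))))).mp hprov.deduction

theorem consistent_of_blame_not_mem {ι : Type*} {Cs Ds : ι → Set Agent}
    {ψ : ι → Formula Agent V} (hDsD : ∀ i, Ds i ⊆ D)
    (hDs : Pairwise fun i j => Disjoint (Ds i) (Ds j))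
    (hφ : φ ∈ X) (hBφ : blame C D φ ∉ X) :
    Consistent (insert φ (knowledge C X ∪ (fun i => (ψ i).neg) ''
      {i | Cs i ⊆ C ∧ dknow (Cs i) (blame (Cs i) (Ds i) (ψ i)) ∈ X})) := by
  classical
  intro hinc
  obtain ⟨T, hTS, hT⟩ :=
    (provableFrom_neg_of_not_consistent_insert (not_not.2 hinc)).exists_finset_of_union_image
  by_cases hall : ∀ i ∈ T, (ψ i).neg ∈ X
  · refine hX.neg_mem_iff.1 (hX.mem_of_provableFrom (hT.mono ?_)) hφ
    rintro χ (hχ | ⟨i, hi, rfl⟩)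
    exacts [hX.knowledge_subset hχ, hall i hi]
  push Not at hall
  obtain ⟨j, hjT, hj⟩ := hall
  rw [hX.neg_mem_iff, not_not] at hj
  obtain ⟨hCj, hj_threat⟩ := hTS hjT
  rw [← Finset.insert_erase hjT, Finset.coe_insert, Set.image_insert_eq, Set.union_insert] at hT
  have hthreats : ∀ i ∈ T.erase j,
      Cs i ⊆ C ∧ Ds i ⊆ D ∧ dknow (Cs i) (blame (Cs i) (Ds i) (ψ i)) ∈ X := fun i hi =>
    have hi := hTS (Finset.mem_of_mem_erase hi)
    ⟨hi.1, hDsD i, hi.2⟩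
  have hBj : blame C (Ds j) (ψ j) ∈ X :=
    hX.mem_of_provable_imp (.monoB hCj subset_rfl) (hX.blame_mem_of_dknow_blame hj_threat hj)
  refine hBφ (hX.blame_mem_of_threats hDs hφ (T.erase j) hthreats hj hBj (hDsD j)
    (fun i hi => hDs (Finset.ne_of_mem_erase hi).symm) ?_)
  exact (ProvableFrom.thm (.taut fun v hv => by simp only [hv.1, hv.2]; tauto :
    Provable (((ψ j).neg.imp φ.neg).imp (φ.imp (ψ j))))).mp hT.deduction

end MaxConsistent

end Logic

theorem exists_forall_not_of_mk_lt {α β : Type u} (h : Cardinal.mk α < Cardinal.mk β)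
    (R : α → β → Prop) (hR : ∀ a b b', R a b → R a b' → b = b') : ∃ b, ∀ a, ¬ R a b := by
  by_contra! hall
  choose g hg using hall
  exact h.not_ge (Cardinal.mk_le_of_injective (f := g) fun b b' he =>
    hR _ _ _ (hg b) (by rw [he]; exact hg b'))

theorem exists_common_prefix_of_forall_mem {α ι : Type*} {label : α → Set ι} {E : Set ι} :
    ∀ {u v : List α}, (∀ i ∈ E, ∃ w t t', u = w ++ t ∧ v = w ++ t' ∧
      (∀ x ∈ t, i ∈ label x) ∧ ∀ x ∈ t', i ∈ label x) →
    ∃ w t t', u = w ++ t ∧ v = w ++ t' ∧ (∀ x ∈ t, E ⊆ label x) ∧ ∀ x ∈ t', E ⊆ label x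
  | a :: u, b :: v, h => by
    by_cases hab : a = b
    · subst hab
      obtain ⟨w, t, t', rfl, rfl, ht, ht'⟩ := exists_common_prefix_of_forall_mem fun i hi => by
        obtain ⟨_ | ⟨c, w⟩, t, t', hu, hv, ht, ht'⟩ := h i hi
        · subst hu hv
          exact ⟨[], u, v, rfl, rfl, fun x hx => ht x (.tail _ hx),
            fun x hx => ht' x (.tail _ hx)⟩
        · obtain ⟨-, rfl⟩ := List.cons.inj hu
          obtain ⟨-, rfl⟩ := List.cons.inj hv
          exact ⟨w, t, t', rfl, rfl, ht, ht'⟩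
      exact ⟨a :: w, t, t', rfl, rfl, ht, ht'⟩
    · refine ⟨[], a :: u, b :: v, rfl, rfl, fun x hx i hi => ?_, fun x hx i hi => ?_⟩ <;>
      obtain ⟨_ | ⟨c, w⟩, t, t', hu, hv, ht, ht'⟩ := h i hi
      · exact ht x (by simpa [hu] using hx)
      · exact absurd ((List.cons.inj hu).1.trans (List.cons.inj hv).1.symm) hab
      · exact ht' x (by simpa [hv] using hx)
      · exact absurd ((List.cons.inj hu).1.trans (List.cons.inj hv).1.symm) hab
  | [], v, h => ⟨[], [], v, rfl, rfl, by simp, fun x hx i hi => by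
      obtain ⟨w, t, t', hu, hv, -, ht'⟩ := h i hi
      obtain ⟨rfl, rfl⟩ := List.append_eq_nil_iff.1 hu.symm
      exact ht' x (by simpa [hv] using hx)⟩
  | a :: u, [], h => ⟨[], a :: u, [], rfl, rfl, fun x hx i hi => by
      obtain ⟨w, t, t', hu, hv, ht, -⟩ := h i hi
      obtain ⟨rfl, rfl⟩ := List.append_eq_nil_iff.1 hv.symm
      exact ht x (by simpa [hu] using hx), by simp⟩

section CanonicalGame

variable {X₀ : Set (Formula Agent V)}

theorem hdSeq_append (Z : Set (Formula Agent V)) (l₁ l₂ : List (Step Agent V B)) :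
    hdSeq Z (l₁ ++ l₂) = hdSeq (hdSeq Z l₁) l₂ := by
  induction l₁ generalizing Z with
  | nil => rfl
  | cons st l ih => exact ih st.2.2

theorem validSeq_append {Z : Set (Formula Agent V)} {l₁ l₂ : List (Step Agent V B)} :
    ValidSeq Z (l₁ ++ l₂) ↔ ValidSeq Z l₁ ∧ ValidSeq (hdSeq Z l₁) l₂ := by
  induction l₁ generalizing Z with
  | nil => simp [ValidSeq, hdSeq]
  | cons st l ih =>
    simp only [List.cons_append, ValidSeq, hdSeq, ih]
    tauto

theorem MaxConsistent.hdSeq {Z : Set (Formula Agent V)} (hZ : MaxConsistent Z) :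
    ∀ {l : List (Step Agent V B)}, ValidSeq Z l → MaxConsistent (hdSeq Z l)
  | [], _ => hZ
  | _ :: _, h => MaxConsistent.hdSeq h.1 h.2.2

theorem MaxConsistent.chd (hX₀ : MaxConsistent X₀) (u : COutcome X₀ B) :
    MaxConsistent (chd u) :=
  hX₀.hdSeq u.2

theorem know_mem_hdSeq_iff {E : Set Agent} {χ : Formula Agent V} :
    ∀ {Z : Set (Formula Agent V)} {t : List (Step Agent V B)}, MaxConsistent Z → ValidSeq Z t →
      (∀ st ∈ t, E ⊆ st.1) → (know E χ ∈ hdSeq Z t ↔ know E χ ∈ Z)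
  | _, [], _, _, _ => Iff.rfl
  | _, _ :: _, hZ, ⟨hX, hZX, ht⟩, hlab =>
    (know_mem_hdSeq_iff hX ht fun st hst => hlab st (.tail _ hst)).trans
      (hZ.know_mem_iff_of_knowledge_subset hX hZX (hlab _ List.mem_cons_self))

theorem know_mem_chd_iff (hX₀ : MaxConsistent X₀) {E : Set Agent} {u v : COutcome X₀ B}
    (h : csimC E u v) (χ : Formula Agent V) : know E χ ∈ chd u ↔ know E χ ∈ chd v := by
  obtain ⟨w, t, t', hu, hv, ht, ht'⟩ :=
    exists_common_prefix_of_forall_mem (label := Prod.fst) h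
  have hu₂ := u.2
  have hv₂ := v.2
  rw [hu, validSeq_append] at hu₂
  rw [hv, validSeq_append] at hv₂
  have hW := hX₀.hdSeq hu₂.1
  rw [chd, chd, hu, hv, hdSeq_append, hdSeq_append, know_mem_hdSeq_iff hW hu₂.2 ht,
    know_mem_hdSeq_iff hW hv₂.2 ht']

theorem dknow_mem_chd_iff (hX₀ : MaxConsistent X₀) {E : Set Agent} {u v : COutcome X₀ B}
    (h : csimC E u v) (χ : Formula Agent V) : dknow E χ ∈ chd u ↔ dknow E χ ∈ chd v := by
  rw [dknow, (hX₀.chd u).neg_mem_iff, (hX₀.chd v).neg_mem_iff, know_mem_chd_iff hX₀ h]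

theorem csimA_symm {a : Agent} {u v : COutcome X₀ B} (h : csimA a u v) : csimA a v u :=
  let ⟨w, t, t', hu, hv, ht, ht'⟩ := h
  ⟨w, t', t, hv, hu, ht', ht⟩

theorem csimA_trans {a : Agent} {u v z : COutcome X₀ B} (h₁ : csimA a u v)
    (h₂ : csimA a v z) : csimA a u z := by
  obtain ⟨w₁, t₁, t₁', hu, hv, ht₁, ht₁'⟩ := h₁
  obtain ⟨w₂, t₂, t₂', hv', hz, ht₂, ht₂'⟩ := h₂
  rcases List.append_eq_append_iff.1 (hv.symm.trans hv') with ⟨r, rfl, rfl⟩ | ⟨r, rfl, rfl⟩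
  · refine ⟨w₁, t₁, r ++ t₂', hu, by rw [hz, List.append_assoc], ht₁, fun x hx => ?_⟩
    rcases List.mem_append.1 hx with hx | hx
    exacts [ht₁' x (List.mem_append_left _ hx), ht₂' x hx]
  · refine ⟨w₂, r ++ t₁, t₂', by rw [hu, List.append_assoc], hz, fun x hx => ?_, ht₂'⟩
    rcases List.mem_append.1 hx with hx | hx
    exacts [ht₂ x (List.mem_append_left _ hx), ht₁ x hx]

theorem csimC_symm {C : Set Agent} {u v : COutcome X₀ B} (h : csimC C u v) : csimC C v u :=
  fun a ha => csimA_symm (h a ha)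

theorem csimC_trans {C : Set Agent} {u v z : COutcome X₀ B} (h₁ : csimC C u v)
    (h₂ : csimC C v z) : csimC C u z :=
  fun a ha => csimA_trans (h₁ a ha) (h₂ a ha)

theorem crel_equivalence : Equivalence (crel X₀ B) :=
  ⟨fun u _ _ => ⟨u.1, [], [], by simp, by simp, by simp, by simp⟩, csimC_symm, csimC_trans⟩

theorem csimC_of_ctoI_eq {C : Set Agent} {u v : COutcome X₀ B} (h : ctoI u = ctoI v) :
    csimC C u v :=
  fun a _ => (crel_equivalence.eqvGen_iff.1 (Quot.eqvGen_exact h)) a trivial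

theorem csimC_of_IsimC {C : Set Agent} {x x' : CPlay X₀ B} (hx : x ∈ CP X₀ B)
    (hx' : x' ∈ CP X₀ B) (h : IsimC C x.1 x'.1) : csimC C x.2.2 x'.2.2 :=
  let ⟨_, _, hu, hv, huv⟩ := h
  csimC_trans (csimC_trans (csimC_of_ctoI_eq (hx.1.trans hu.symm)) huv)
    (csimC_of_ctoI_eq (hv.trans hx'.1.symm))

def child (u : COutcome X₀ B) (C : Set Agent) (b : B) {Y : Set (Formula Agent V)}
    (hY : MaxConsistent Y) (hKY : knowledge C (chd u) ⊆ Y) : COutcome X₀ B :=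
  ⟨u.1 ++ [(C, b, Y)], validSeq_append.2 ⟨u.2, hY, hKY, trivial⟩⟩

section Child

variable (u : COutcome X₀ B) (C : Set Agent) (b : B) {Y : Set (Formula Agent V)}
  (hY : MaxConsistent Y) (hKY : knowledge C (chd u) ⊆ Y)

theorem chd_child : chd (child u C b hY hKY) = Y :=
  hdSeq_append X₀ u.1 [(C, b, Y)]

theorem csimC_child : csimC C u (child u C b hY hKY) :=
  fun _ ha => ⟨u.1, [], [(C, b, Y)], by simp, rfl, by simp, by simpa using ha⟩

variable {u C b hY hKY}

/-- Unless `v` descends from the new child, the path from the child to `v` leaves it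
through the edge labelled `C`. -/
theorem csimA_of_csimA_child {a : Agent} {v : COutcome X₀ B}
    (h : csimA a (child u C b hY hKY) v) (hv : ¬ u.1 ++ [(C, b, Y)] <+: v.1) :
    a ∈ C ∧ csimA a u v := by
  obtain ⟨w, t, t', hw, hv', ht, ht'⟩ := h
  change u.1 ++ [(C, b, Y)] = w ++ t at hw
  rcases List.eq_nil_or_concat t with rfl | ⟨t₀, st, rfl⟩
  · exact absurd ⟨t', by rw [hv', hw, List.append_nil]⟩ hv
  rw [List.concat_eq_append] at hw ht
  rw [← List.append_assoc] at hw
  obtain ⟨hu, rfl⟩ := List.append_singleton_inj.1 hw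
  exact ⟨ht (C, b, Y) (by simp), w, t₀, t', hu, hv', fun x hx => ht x (by simp [hx]), ht'⟩

end Child

/-- The agents outside `D` are made to threaten `θ`, which `Y` refutes. -/
theorem exists_play_of_maxConsistent (hB : Cardinal.mk Agent < Cardinal.mk B)
    (hX₀ : MaxConsistent X₀) (u : COutcome X₀ B) (C D : Set Agent) (s : Agent → CAct X₀ B)
    {Y : Set (Formula Agent V)} (hY : MaxConsistent Y) (hKY : knowledge C (chd u) ⊆ Y)
    (hthreat : ∀ a ∈ D, (s a).2.1 ⊆ C →
      dknow (s a).2.1 (blame (s a).2.1 {a' ∈ D | s a' = s a} (s a).1) ∈ chd u →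
        (s a).1.neg ∈ Y)
    (θ : Formula Agent V) (hθ : θ.neg ∈ Y) :
    ∃ x' ∈ CP X₀ B, IsimC C (ctoI u) x'.1 ∧ (∀ a ∈ D, s a = x'.2.1 a) ∧ chd x'.2.2 = Y := by
  classical
  obtain ⟨b, hb⟩ := exists_forall_not_of_mk_lt hB
    (fun a b => u.1 ++ [(C, b, Y)] <+: (s a).2.2.1) fun a b b' h h' => by
      simpa using (List.prefix_of_prefix_length_le h h' (by simp)).eq_of_length (by simp)
  let δ : Agent → CAct X₀ B := fun a => if a ∈ D then s a else (θ, C, u)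
  refine ⟨(ctoI (child u C b hY hKY), δ, child u C b hY hKY), ⟨rfl, ?_⟩,
    ⟨u, _, rfl, rfl, csimC_child u C b hY hKY⟩, fun a ha => (if_pos ha).symm,
    chd_child u C b hY hKY⟩
  intro v C' D' ψ hK hδ hsim
  change csimC C' (child u C b hY hKY) v at hsim
  change ψ.neg ∈ chd (child u C b hY hKY)
  rw [chd_child]
  by_cases hD' : D' ⊆ D
  · obtain ⟨a, ha⟩ := D'.eq_empty_or_nonempty.resolve_left fun h =>
      (hX₀.chd v).dknow_blame_empty_not_mem (h ▸ hK)
    have hsa : s a = (ψ, C', v) := by simpa [δ, hD' ha] using hδ a ha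
    have hCu : ∀ c ∈ C', c ∈ C ∧ csimA c u v := fun c hc =>
      csimA_of_csimA_child (hsim c hc) (by simpa [hsa] using hb a)
    have hD'D : D' ⊆ {a' ∈ D | s a' = (ψ, C', v)} := fun a' ha' =>
      ⟨hD' ha', by simpa [δ, hD' ha'] using hδ a' ha'⟩
    have hthreat_a := hthreat a (hD' ha)
    rw [hsa] at hthreat_a
    refine hthreat_a (fun c hc => (hCu c hc).1) ?_
    rw [dknow_mem_chd_iff hX₀ fun c hc => (hCu c hc).2]
    exact (hX₀.chd v).dknow_mem_of_provable_imp (.monoB subset_rfl hD'D) hK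
  · obtain ⟨a, haD', haD⟩ := Set.not_subset.1 hD'
    obtain ⟨rfl, -⟩ : θ = ψ ∧ _ := by simpa [δ, haD] using hδ a haD'
    exact hθ

theorem csat_know_iff (hB : Cardinal.mk Agent < Cardinal.mk B) (hX₀ : MaxConsistent X₀)
    {C : Set Agent} {φ : Formula Agent V} {x : CPlay X₀ B} (hx : x ∈ CP X₀ B)
    (ih : ∀ x' ∈ CP X₀ B, CSat X₀ B φ x' ↔ φ ∈ chd x'.2.2) :
    CSat X₀ B (know C φ) x ↔ know C φ ∈ chd x.2.2 := by
  refine ⟨fun h => ?_, fun h x' hx' hsim => (ih x' hx').2 ?_⟩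
  · by_contra hK
    have hcons : Consistent (insert φ.neg (knowledge C (chd x.2.2))) := fun hinc =>
      hK ((hX₀.chd x.2.2).know_mem_of_provableFrom
        (provableFrom_of_not_consistent_insert_neg (not_not.2 hinc)))
    obtain ⟨Y, hsub, hY⟩ := lindenbaum hcons
    obtain ⟨x', hx', hsim, -, hx'Y⟩ := exists_play_of_maxConsistent hB hX₀ x.2.2 C ∅
      (fun _ => (φ, C, x.2.2)) hY ((Set.subset_insert _ _).trans hsub) (fun _ ha => ha.elim) φ
      (hsub (Set.mem_insert _ _))
    have hφ := (ih x' hx').1 (h x' hx' (hx.1 ▸ hsim))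
    exact hY.neg_mem_iff.1 (hsub (Set.mem_insert _ _)) (hx'Y ▸ hφ)
  · exact (hX₀.chd x'.2.2).mem_of_provable_imp .truthK
      ((know_mem_chd_iff hX₀ (csimC_of_IsimC hx hx' hsim) φ).1 h)

theorem csat_blame_iff (hB : Cardinal.mk Agent < Cardinal.mk B) (hX₀ : MaxConsistent X₀)
    {C D : Set Agent} {φ : Formula Agent V} {x : CPlay X₀ B} (hx : x ∈ CP X₀ B)
    (ih : ∀ x' ∈ CP X₀ B, CSat X₀ B φ x' ↔ φ ∈ chd x'.2.2) :
    CSat X₀ B (blame C D φ) x ↔ blame C D φ ∈ chd x.2.2 := by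
  have hX := hX₀.chd x.2.2
  refine ⟨fun ⟨hφ, s, hs⟩ => ?_, fun h => ?_⟩
  · rw [ih x hx] at hφ
    by_contra hBφ
    obtain ⟨Y, hsub, hY⟩ := lindenbaum (hX.consistent_of_blame_not_mem (Cs := fun σ => σ.2.1)
      (Ds := fun σ => {a ∈ D | s a = σ}) (ψ := fun σ => σ.1) (fun _ _ h => h.1)
      (fun _ _ hne => Set.disjoint_left.2 fun _ h h' => hne (h.2.symm.trans h'.2)) hφ hBφ)
    have hφY : φ ∈ Y := hsub (Set.mem_insert _ _)
    obtain ⟨x', hx', hsim, hδ, hx'Y⟩ := exists_play_of_maxConsistent hB hX₀ x.2.2 C D s hY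
      (fun _ hχ => hsub (.inr (.inl hχ)))
      (fun a _ hC hK => hsub (.inr (.inr ⟨s a, ⟨hC, hK⟩, rfl⟩)))
      φ.neg (hY.neg_mem_iff.2 fun h => hY.neg_mem_iff.1 h hφY)
    exact hs x' hx' (hx.1 ▸ hsim) hδ ((ih x' hx').2 (hx'Y ▸ hφY))
  · have hφ := hX.mem_of_provable_imp .truthB h
    refine ⟨(ih x hx).2 hφ, fun _ => (φ, C, x.2.2), fun x' hx' hsim hδ hsat => ?_⟩
    have := hx'.2 x.2.2 C D φ (hX.dknow_mem_of_mem h) (fun a ha => (hδ a ha).symm)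
      (csimC_symm (csimC_of_IsimC hx hx' hsim))
    exact (hX₀.chd x'.2.2).neg_mem_iff.1 this ((ih x' hx').1 hsat)

end CanonicalGame

/-- Lemma 19, induction/truth lemma: in the canonical game G(X₀), for
    any play (α,δ,ω) ∈ P and any formula φ, (α,δ,ω) ⊩ φ iff φ ∈ hd(ω). -/
theorem induction_lemma {Agent V B : Type}
    (hB : Cardinal.mk Agent < Cardinal.mk B)
    (X₀ : Set (Formula Agent V)) (hX₀ : MaxConsistent X₀)
    (x : CPlay X₀ B) (hx : x ∈ CP X₀ B) (φ : Formula Agent V) :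
    CSat X₀ B φ x ↔ φ ∈ chd x.2.2 := by
  induction φ generalizing x with
  | var p => exact ⟨fun h => h.2, fun h => ⟨hx, h⟩⟩
  | neg φ ih => exact (not_congr (ih x hx)).trans (hX₀.chd x.2.2).neg_mem_iff.symm
  | imp φ ψ ihφ ihψ =>
    exact (imp_congr (ihφ x hx) (ihψ x hx)).trans (hX₀.chd x.2.2).imp_mem_iff.symm
  | know C φ ih => exact csat_know_iff hB hX₀ hx ih
  | blame C D φ ih => exact csat_blame_iff hB hX₀ hx ih

end DutyToWarn
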